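/- For timed words w_1, w_2 over alphabet Σ, the 0-eliminations satisfy ν(w_1) = ν(w_2) if and only if w_1 and w_2 admit decompositions w_i = u_i v_i where all events of u_i occur at time 0 and d(v_1, v_2) = 0. -/

import Mathlib

/-!
A timed word is at distance 0 from another exactly when every event (letter and time) of each
occurs in the other, i.e. when the two have the same set of events. In a word with nonnegative,
nondecreasing times the events at time 0 form a prefix, and dropping it leaves a suffix whose
events all have positive time. Since ν only sees events of positive time, ν(w₁) = ν(w₂) holds
exactly when these suffixes have the same set of events.
-/

open scoped ENNReal

noncomputable def dirDist {α : Type*} (w v : List (α × ℝ)) : ℝ≥0∞ :=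
  ⨆ i : Fin w.length, ⨅ j : {j : Fin v.length // (v.get j).1 = (w.get i).1},
    ENNReal.ofReal |(w.get i).2 - (v.get j.1).2|

noncomputable def tdist {α : Type*} (w v : List (α × ℝ)) : ℝ≥0∞ :=
  max (dirDist w v) (dirDist v w)

/-- The 0-elimination of a timed word, viewed as the function assigning to each
positive time instant the set of letters occurring at that time (time-0 events
are discarded).  This data determines the 0-eliminated timed word
`(A_1,t_1)...(A_n,t_n)` uniquely. -/
def nuAbs {α : Type*} (w : List (α × ℝ)) : ℝ → Set α :=
  fun t => if 0 < t then {a | (a, t) ∈ w} else ∅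

theorem iInf_eq_bot_iff_of_finite {ι α : Type*} [CompleteLinearOrder α] [Nontrivial α]
    [Finite ι] {f : ι → α} : ⨅ i, f i = ⊥ ↔ ∃ i, f i = ⊥ := by
  refine ⟨fun h => ?_, fun ⟨i, hi⟩ => eq_bot_iff.mpr (hi ▸ iInf_le f i)⟩
  cases isEmpty_or_nonempty ι with
  | inl _ => exact absurd (iInf_of_empty f ▸ h) top_ne_bot
  | inr _ =>
    obtain ⟨i, hi⟩ := exists_eq_ciInf_of_finite (f := f)
    exact ⟨i, hi.trans h⟩

namespace TimedWord

variable {α : Type*}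

theorem dirDist_eq_zero_iff {w v : List (α × ℝ)} : dirDist w v = 0 ↔ w ⊆ v := by
  have hmatch (e : α × ℝ) (j : Fin v.length) (h : (v.get j).1 = e.1) :
      ENNReal.ofReal |e.2 - (v.get j).2| = 0 ↔ v.get j = e := by
    rw [ENNReal.ofReal_eq_zero, abs_nonpos_iff, sub_eq_zero, Prod.ext_iff, eq_comm (a := e.2)]
    exact (and_iff_right h).symm
  rw [dirDist, ENNReal.iSup_eq_zero]
  refine ⟨fun h e he => ?_, fun h i => ?_⟩
  · obtain ⟨i, rfl⟩ := List.mem_iff_get.mp he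
    obtain ⟨⟨j, hj⟩, hij⟩ := iInf_eq_bot_iff_of_finite.mp (h i)
    exact (hmatch _ j hj).mp hij ▸ List.get_mem v j
  · obtain ⟨j, hj⟩ := List.mem_iff_get.mp (h (List.get_mem w i))
    have hletter := congrArg Prod.fst hj
    exact iInf_eq_bot_iff_of_finite.mpr ⟨⟨j, hletter⟩, (hmatch _ j hletter).mpr hj⟩

theorem tdist_eq_zero_iff {w v : List (α × ℝ)} : tdist w v = 0 ↔ w ⊆ v ∧ v ⊆ w := by
  rw [tdist, ← bot_eq_zero, max_eq_bot, bot_eq_zero, dirDist_eq_zero_iff, dirDist_eq_zero_iff]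

theorem nuAbs_congr {w v : List (α × ℝ)} (hwv : w ⊆ v) (hvw : v ⊆ w) :
    nuAbs w = nuAbs v := by
  funext t
  simp only [nuAbs]
  split_ifs
  · exact Set.ext fun _ => ⟨@hwv _, @hvw _⟩
  · rfl

theorem nuAbs_append_of_time_eq_zero {u v : List (α × ℝ)} (hu : ∀ e ∈ u, e.2 = 0) :
    nuAbs (u ++ v) = nuAbs v := by
  funext t
  simp only [nuAbs]
  split_ifs with ht
  · ext a
    simp only [Set.mem_ofPred_eq, List.mem_append, or_iff_right_iff_imp]
    exact fun h => absurd (hu _ h) ht.ne'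
  · rfl

theorem takeWhile_time_eq_zero (w : List (α × ℝ)) : ∀ e ∈ w.takeWhile (·.2 = 0), e.2 = 0 :=
  fun _ he => by simpa using List.mem_takeWhile_imp he

theorem nuAbs_dropWhile_time_eq_zero (w : List (α × ℝ)) :
    nuAbs (w.dropWhile (·.2 = 0)) = nuAbs w := by
  conv_rhs => rw [← List.takeWhile_append_dropWhile (p := (·.2 = 0)) (l := w)]
  exact (nuAbs_append_of_time_eq_zero (takeWhile_time_eq_zero w)).symm

theorem pos_of_mem_dropWhile_time_eq_zero {w : List (α × ℝ)} (hnn : ∀ e ∈ w, 0 ≤ e.2)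
    (hmono : w.IsChain (fun a b => a.2 ≤ b.2)) : ∀ e ∈ w.dropWhile (·.2 = 0), 0 < e.2 := by
  induction w with
  | nil => simp
  | cons x xs ih =>
    by_cases hx : x.2 = 0
    · rw [List.dropWhile_cons_of_pos (by simpa using hx)]
      exact ih (fun e he => hnn e (List.mem_cons_of_mem _ he)) hmono.tail
    · rw [List.dropWhile_cons_of_neg (by simpa using hx)]
      have hx_pos : 0 < x.2 := (hnn x List.mem_cons_self).lt_of_ne' hx
      have : IsTrans (α × ℝ) (fun a b => a.2 ≤ b.2) := ⟨fun _ _ _ => le_trans⟩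
      rintro e (_ | ⟨_, he⟩)
      · exact hx_pos
      · exact hx_pos.trans_le (List.rel_of_pairwise_cons (List.isChain_iff_pairwise.mp hmono) he)

theorem subset_of_nuAbs_eq {v v' : List (α × ℝ)} (hv : ∀ e ∈ v, 0 < e.2)
    (h : nuAbs v = nuAbs v') : v ⊆ v' := fun e he => by
  have hpos := hv e he
  have hmem : e.1 ∈ nuAbs v e.2 := by simpa [nuAbs, hpos] using he
  rw [h] at hmem
  simpa [nuAbs, hpos] using hmem

end TimedWord

open TimedWord in
/-- `ν(w₁) = ν(w₂)` iff the words decompose as `wᵢ = uᵢ vᵢ` with all events of `uᵢ`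
occurring at time 0 and `d(v₁,v₂) = 0`. -/
theorem nu_eq_iff {α : Type*} (w₁ w₂ : List (α × ℝ))
    (h₁nn : ∀ e ∈ w₁, 0 ≤ e.2) (h₂nn : ∀ e ∈ w₂, 0 ≤ e.2)
    (h₁mono : w₁.Chain' (fun a b => a.2 ≤ b.2)) (h₂mono : w₂.Chain' (fun a b => a.2 ≤ b.2)) :
    nuAbs w₁ = nuAbs w₂ ↔
      ∃ u₁ v₁ u₂ v₂ : List (α × ℝ),
        w₁ = u₁ ++ v₁ ∧ w₂ = u₂ ++ v₂ ∧
        (∀ e ∈ u₁, e.2 = 0) ∧ (∀ e ∈ u₂, e.2 = 0) ∧ tdist v₁ v₂ = 0 := by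
  constructor
  · intro h
    have hν : nuAbs (w₁.dropWhile (·.2 = 0)) = nuAbs (w₂.dropWhile (·.2 = 0)) := by
      rw [nuAbs_dropWhile_time_eq_zero, nuAbs_dropWhile_time_eq_zero, h]
    refine ⟨_, _, _, _, List.takeWhile_append_dropWhile.symm,
      List.takeWhile_append_dropWhile.symm, takeWhile_time_eq_zero w₁, takeWhile_time_eq_zero w₂,
      tdist_eq_zero_iff.mpr ⟨?_, ?_⟩⟩
    · exact subset_of_nuAbs_eq (pos_of_mem_dropWhile_time_eq_zero h₁nn h₁mono) hν
    · exact subset_of_nuAbs_eq (pos_of_mem_dropWhile_time_eq_zero h₂nn h₂mono) hν.symm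
  · rintro ⟨u₁, v₁, u₂, v₂, rfl, rfl, hu₁, hu₂, hd⟩
    obtain ⟨h₁₂, h₂₁⟩ := tdist_eq_zero_iff.mp hd
    rw [nuAbs_append_of_time_eq_zero hu₁, nuAbs_append_of_time_eq_zero hu₂, nuAbs_congr h₁₂ h₂₁]
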